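/- Let M ⊆ B(H) be a von Neumann algebra and let (R, T, ψ) be a bipartite exact embezzlement protocol for α in (M, M', H). Let P be the orthogonal projection of H onto the closure of {Y ψ : Y ∈ M'} and P' the orthogonal projection onto the closure of {X ψ : X ∈ M}. Set V i = P (R i 0)* P and W j = P' (T j 0)* P'. Then for every j ∈ Fin d: (V j)* (V j) = P, ∑_{i ∈ Fin d} (V i)(V i)* = P, (W j)* (W j) = P', and ∑_{i ∈ Fin d} (W i)(W i)* = P'. In particular the compressions V₀, …, V_{d-1} form a collection of d Cuntz isometries on the range of P, and W₀, …, W_{d-1} on the range of P'. -/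

import Mathlib

open scoped InnerProductSpace
open ContinuousLinearMap

/-- The block operator on `ℓ²(Fin d; H)` associated with a `d × d` matrix of operators on `H`,
acting by `(R x) i = ∑ j, (R i j) (x j)`. -/
noncomputable def blockOp {H : Type*} [NormedAddCommGroup H] [InnerProductSpace ℂ H] {d : ℕ}
    (R : Fin d → Fin d → H →L[ℂ] H) :
    (PiLp 2 fun _ : Fin d => H) →L[ℂ] (PiLp 2 fun _ : Fin d => H) :=
  (((PiLp.continuousLinearEquiv 2 ℂ (fun _ : Fin d => H)).symm :
      (∀ _ : Fin d, H) →L[ℂ] (PiLp 2 fun _ : Fin d => H))) ∘L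
    (ContinuousLinearMap.pi fun i => ∑ j, (R i j) ∘L (ContinuousLinearMap.proj j)) ∘L
    (((PiLp.continuousLinearEquiv 2 ℂ (fun _ : Fin d => H)) :
      (PiLp 2 fun _ : Fin d => H) →L[ℂ] (∀ _ : Fin d, H)))

variable {H : Type*} [NormedAddCommGroup H] [InnerProductSpace ℂ H] [CompleteSpace H]

/-- `R` is a contraction in `M_d ⊗ M`: all blocks lie in `M` and the block operator on
`ℓ²(Fin d; H)` has operator norm at most `1`. -/
def IsContractionIn (M : VonNeumannAlgebra H) {d : ℕ}
    (R : Fin d → Fin d → H →L[ℂ] H) : Prop :=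
  (∀ i j, R i j ∈ M) ∧ ‖blockOp R‖ ≤ 1

/-- A bipartite exact embezzlement protocol for `α` in `(M, M', H)`: `R` is a contraction in
`M_d ⊗ M`, `T` is a contraction with blocks in the commutant `M'`, `ψ` is a unit vector, and
`(R i 0)(T j 0) ψ = δ_{ij} α i • ψ` for all `i, j`. -/
def BipartiteProtocol (M : VonNeumannAlgebra H) {d : ℕ} [NeZero d] (α : Fin d → ℝ)
    (R T : Fin d → Fin d → H →L[ℂ] H) (ψ : H) : Prop :=
  IsContractionIn M R ∧ IsContractionIn M.commutant T ∧ ‖ψ‖ = 1 ∧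
    ∀ i j, (R i 0) ((T j 0) ψ) = (if i = j then (α i : ℂ) else 0) • ψ

/-- A monopartite exact embezzlement protocol for `α` in `(M, H)`: `R` is a contraction in
`M_d ⊗ M`, `ψ` is a unit vector, and `⟨(R i 0)* X (R j 0) ψ, ψ⟩ = δ_{ij} (α i)² ⟨X ψ, ψ⟩`
for all `X ∈ M` and all `i, j`. -/
def MonopartiteProtocol (M : VonNeumannAlgebra H) {d : ℕ} [NeZero d] (α : Fin d → ℝ)
    (R : Fin d → Fin d → H →L[ℂ] H) (ψ : H) : Prop :=
  IsContractionIn M R ∧ ‖ψ‖ = 1 ∧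
    ∀ X ∈ M, ∀ i j : Fin d,
      ⟪(adjoint (R i 0)) (X ((R j 0) ψ)), ψ⟫_ℂ
        = (if i = j then ((α i : ℂ)) ^ 2 else 0) * ⟪X ψ, ψ⟫_ℂ

/-- The orthogonal projection of `H` onto the closure of `{Y ψ : Y ∈ S}`, as an operator
on `H`. -/
noncomputable def suppProjOn (S : Set (H →L[ℂ] H)) (ψ : H) : H →L[ℂ] H :=
  letI K := (Submodule.span ℂ ((fun Y : H →L[ℂ] H => Y ψ) '' S)).topologicalClosure
  K.subtypeL ∘L (Submodule.orthogonalProjection K : H →L[ℂ] K)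

/-- The support projection of the state `⟨· ψ, ψ⟩` on `M`: the orthogonal projection onto
the closure of `M' ψ`. -/
noncomputable def suppP (M : VonNeumannAlgebra H) (ψ : H) : H →L[ℂ] H :=
  suppProjOn (M.commutant : Set (H →L[ℂ] H)) ψ

/-- The support projection of the state `⟨· ψ, ψ⟩` on `M'`: the orthogonal projection onto
the closure of `M ψ`. -/
noncomputable def suppP' (M : VonNeumannAlgebra H) (ψ : H) : H →L[ℂ] H :=
  suppProjOn (M : Set (H →L[ℂ] H)) ψ


/-! For the first columns `Aᵢ = R i 0 ∈ M` and `Bⱼ = T j 0 ∈ M'`, comparing the column bounds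
`∑ᵢ ‖Aᵢ v‖² ≤ ‖v‖²`, `∑ⱼ ‖Bⱼ v‖² ≤ ‖v‖²` with `∑ᵢ αᵢ² = 1` forces `‖Bⱼ ψ‖ = αⱼ` and
`‖Aᵢ ψ‖ = αᵢ`, so the column `(Aᵢ)` is isometric at `Bⱼ ψ` and at `ψ`. A contraction that is
isometric at a vector is inverted there by its adjoint, which gives `αⱼ Aⱼ* ψ = Bⱼ ψ`,
`αᵢ Bᵢ* ψ = Aᵢ ψ` (the same with `M` and `M'` exchanged) and `∑ᵢ Aᵢ* Aᵢ ψ = ψ`.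
Since elements of `M` commute with `M'`, both `Aᵢ` and `Aᵢ*` map `M' ψ` into itself, so
`P Aᵢ* P = Aᵢ* P` and `P Aᵢ P = Aᵢ P`, while `Aⱼ Aⱼ*` and `∑ᵢ Aᵢ* Aᵢ` fix `M' ψ` and hence act
as the identity on the range of `P`. The Cuntz relations for `Vᵢ = Aᵢ* P` follow, and those for
the `Wⱼ` are the same statement for the protocol `(T, R, ψ)` in `M'`, as `M'' = M`. -/

section Contraction

variable {𝕜 E F : Type*} [RCLike 𝕜] [NormedAddCommGroup E] [InnerProductSpace 𝕜 E]
  [CompleteSpace E] [NormedAddCommGroup F] [InnerProductSpace 𝕜 F] [CompleteSpace F]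

theorem ContinuousLinearMap.adjoint_apply_apply_eq_self_of_norm_apply_eq {T : E →L[𝕜] F}
    (hT : ‖T‖ ≤ 1) {x : E} (hx : ‖T x‖ = ‖x‖) : adjoint T (T x) = x := by
  have hle : ‖adjoint T (T x)‖ ≤ ‖x‖ :=
    calc ‖adjoint T (T x)‖ ≤ ‖adjoint T‖ * ‖T x‖ := (adjoint T).le_opNorm _
      _ ≤ 1 * ‖x‖ := by rw [LinearIsometryEquiv.norm_map, hx]; gcongr
      _ = ‖x‖ := one_mul _
  have hinner : RCLike.re ⟪adjoint T (T x), x⟫_𝕜 = ‖x‖ ^ 2 := by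
    rw [adjoint_inner_left, inner_self_eq_norm_sq (𝕜 := 𝕜), hx]
  have hsq : ‖adjoint T (T x) - x‖ ^ 2 ≤ 0 := by
    rw [norm_sub_sq (𝕜 := 𝕜), hinner]
    nlinarith [norm_nonneg (adjoint T (T x)), norm_nonneg x]
  rw [← sub_eq_zero, ← norm_le_zero_iff]
  exact le_of_sq_le_sq (by simpa using hsq) le_rfl

variable {P A : E →L[𝕜] E}

theorem ContinuousLinearMap.adjoint_compression_comp_compression (hP : IsStarProjection P)
    (hinv : P ∘L adjoint A ∘L P = adjoint A ∘L P) (hcoiso : A ∘L adjoint A ∘L P = P) :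
    adjoint (P ∘L adjoint A ∘L P) ∘L (P ∘L adjoint A ∘L P) = P := by
  have hPadj : adjoint P = P := hP.isSelfAdjoint.adjoint_eq
  have hPP : ∀ x, P (P x) = P x := fun x => congr($hP.isIdempotentElem.eq x)
  have hinv_x : ∀ x, P (adjoint A (P x)) = adjoint A (P x) := fun x => congr($hinv x)
  have hcoiso_x : ∀ x, A (adjoint A (P x)) = P x := fun x => congr($hcoiso x)
  ext x
  simp only [adjoint_comp, adjoint_adjoint, hPadj, comp_apply, hPP, hinv_x, hcoiso_x]

theorem ContinuousLinearMap.compression_comp_adjoint_compression (hP : IsStarProjection P)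
    (hinv : P ∘L adjoint A ∘L P = adjoint A ∘L P) (hinv' : P ∘L A ∘L P = A ∘L P) :
    (P ∘L adjoint A ∘L P) ∘L adjoint (P ∘L adjoint A ∘L P) = adjoint A ∘L A ∘L P := by
  have hPadj : adjoint P = P := hP.isSelfAdjoint.adjoint_eq
  have hPP : ∀ x, P (P x) = P x := fun x => congr($hP.isIdempotentElem.eq x)
  have hinv_x : ∀ x, P (adjoint A (P x)) = adjoint A (P x) := fun x => congr($hinv x)
  have hinv'_x : ∀ x, P (A (P x)) = A (P x) := fun x => congr($hinv' x)
  ext x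
  simp only [adjoint_comp, adjoint_adjoint, hPadj, comp_apply]
  rw [hPP, hinv_x, hinv'_x]

end Contraction

section Column

variable {E : Type*} [NormedAddCommGroup E] [InnerProductSpace ℂ E] {d : ℕ} [NeZero d]

theorem blockOp_single_zero (R : Fin d → Fin d → E →L[ℂ] E) (v : E) :
    blockOp R (PiLp.single 2 0 v) = WithLp.toLp 2 fun i => R i 0 v := by
  ext i
  simp only [blockOp, ← PiLp.toLp_single, coe_comp, ContinuousLinearEquiv.coe_coe,
    Function.comp_apply, PiLp.continuousLinearEquiv_symm_apply, pi_apply, sum_apply]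
  rw [Finset.sum_eq_single_of_mem 0 (Finset.mem_univ _) fun j _ hj => by simp [hj]]
  simp

theorem norm_blockOp_single_zero_sq (R : Fin d → Fin d → E →L[ℂ] E) (v : E) :
    ‖blockOp R (PiLp.single 2 0 v)‖ ^ 2 = ∑ i, ‖R i 0 v‖ ^ 2 := by
  simp [blockOp_single_zero, PiLp.norm_sq_eq_of_L2]

theorem norm_blockOp_single_zero_le {R : Fin d → Fin d → E →L[ℂ] E}
    (hR : ‖blockOp R‖ ≤ 1) (v : E) : ‖blockOp R (PiLp.single 2 0 v)‖ ≤ ‖v‖ :=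
  calc ‖blockOp R (PiLp.single 2 0 v)‖ ≤ 1 * ‖(PiLp.single 2 0 v : PiLp 2 fun _ : Fin d => E)‖ :=
        (blockOp R).le_of_opNorm_le hR _
    _ = ‖v‖ := by rw [one_mul, PiLp.norm_single]

theorem sum_norm_sq_apply_le_of_norm_blockOp_le_one {R : Fin d → Fin d → E →L[ℂ] E}
    (hR : ‖blockOp R‖ ≤ 1) (v : E) : ∑ i, ‖R i 0 v‖ ^ 2 ≤ ‖v‖ ^ 2 := by
  rw [← norm_blockOp_single_zero_sq]
  gcongr
  exact norm_blockOp_single_zero_le hR v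

theorem sum_norm_sq_apply_eq_of_embezzle {R T : Fin d → Fin d → E →L[ℂ] E} {α : Fin d → ℝ}
    {ψ : E} (hψ : ‖ψ‖ = 1)
    (hRT : ∀ i j, R i 0 (T j 0 ψ) = (if i = j then (α i : ℂ) else 0) • ψ) (j : Fin d) :
    ∑ i, ‖R i 0 (T j 0 ψ)‖ ^ 2 = α j ^ 2 := by
  simp [hRT, hψ, apply_ite, norm_smul]

theorem norm_sq_apply_eq_of_embezzle {R T : Fin d → Fin d → E →L[ℂ] E} {α : Fin d → ℝ} {ψ : E}
    (hR : ‖blockOp R‖ ≤ 1) (hT : ‖blockOp T‖ ≤ 1)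
    (hψ : ‖ψ‖ = 1) (hsum : ∑ i, α i ^ 2 = 1)
    (hRT : ∀ i j, R i 0 (T j 0 ψ) = (if i = j then (α i : ℂ) else 0) • ψ) (j : Fin d) :
    ‖T j 0 ψ‖ ^ 2 = α j ^ 2 := by
  have hlower : ∀ j ∈ Finset.univ, α j ^ 2 ≤ ‖T j 0 ψ‖ ^ 2 := fun j _ =>
    sum_norm_sq_apply_eq_of_embezzle hψ hRT j ▸
      sum_norm_sq_apply_le_of_norm_blockOp_le_one hR _
  have hupper : ∑ j, ‖T j 0 ψ‖ ^ 2 ≤ ∑ j, α j ^ 2 := by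
    simpa [hψ, hsum] using sum_norm_sq_apply_le_of_norm_blockOp_le_one hT ψ
  exact ((Finset.sum_eq_sum_iff_of_le hlower).mp
    (le_antisymm (Finset.sum_le_sum hlower) hupper) j (Finset.mem_univ j)).symm

end Column

section Protocol

variable {d : ℕ} [NeZero d]

theorem sum_adjoint_apply_apply_eq_self_of_norm_blockOp_le_one {R : Fin d → Fin d → H →L[ℂ] H}
    (hR : ‖blockOp R‖ ≤ 1) {v : H} (hv : ‖v‖ ^ 2 ≤ ∑ i, ‖R i 0 v‖ ^ 2) :
    ∑ i, adjoint (R i 0) (R i 0 v) = v := by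
  have hiso :
      ‖blockOp R (PiLp.single 2 0 v)‖ = ‖(PiLp.single 2 0 v : PiLp 2 fun _ : Fin d => H)‖ := by
    rw [PiLp.norm_single]
    refine le_antisymm (norm_blockOp_single_zero_le hR v) (le_of_sq_le_sq ?_ (norm_nonneg _))
    rwa [norm_blockOp_single_zero_sq]
  have hfix := (blockOp R).adjoint_apply_apply_eq_self_of_norm_apply_eq hR hiso
  refine ext_inner_right ℂ fun u => ?_
  calc ⟪∑ i, adjoint (R i 0) (R i 0 v), u⟫_ℂ
      = ⟪blockOp R (PiLp.single 2 0 v), blockOp R (PiLp.single 2 0 u)⟫_ℂ := by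
        simp [adjoint_inner_left, blockOp_single_zero, PiLp.inner_apply]
    _ = ⟪(PiLp.single 2 0 v : PiLp 2 fun _ : Fin d => H), PiLp.single 2 0 u⟫_ℂ := by
        rw [← adjoint_inner_left, hfix]
    _ = ⟪v, u⟫_ℂ := by
        simp [PiLp.inner_apply, ← PiLp.toLp_single, Pi.single_apply, apply_ite]

section Embezzlement

variable {R T : Fin d → Fin d → H →L[ℂ] H} {α : Fin d → ℝ} {ψ : H}

theorem smul_adjoint_apply_eq_of_embezzle (hR : ‖blockOp R‖ ≤ 1) (hT : ‖blockOp T‖ ≤ 1)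
    (hψ : ‖ψ‖ = 1) (hsum : ∑ i, α i ^ 2 = 1)
    (hRT : ∀ i j, R i 0 (T j 0 ψ) = (if i = j then (α i : ℂ) else 0) • ψ) (j : Fin d) :
    (α j : ℂ) • adjoint (R j 0) ψ = T j 0 ψ := by
  have hv : ‖T j 0 ψ‖ ^ 2 ≤ ∑ i, ‖R i 0 (T j 0 ψ)‖ ^ 2 := by
    rw [sum_norm_sq_apply_eq_of_embezzle hψ hRT, norm_sq_apply_eq_of_embezzle hR hT hψ hsum hRT]
  rw [← sum_adjoint_apply_apply_eq_self_of_norm_blockOp_le_one hR hv]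
  simp [hRT, apply_ite]

theorem sum_adjoint_apply_apply_eq_self_of_embezzle (hR : ‖blockOp R‖ ≤ 1)
    (hT : ‖blockOp T‖ ≤ 1) (hψ : ‖ψ‖ = 1) (hsum : ∑ i, α i ^ 2 = 1)
    (hTR : ∀ i j, T i 0 (R j 0 ψ) = (if i = j then (α i : ℂ) else 0) • ψ) :
    ∑ i, adjoint (R i 0) (R i 0 ψ) = ψ := by
  refine sum_adjoint_apply_apply_eq_self_of_norm_blockOp_le_one hR ?_
  simp [norm_sq_apply_eq_of_embezzle hT hR hψ hsum hTR, hsum, hψ]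

end Embezzlement

section CyclicSubspace

variable {E : Type*} [NormedAddCommGroup E] [InnerProductSpace ℂ E]
  (S : Set (E →L[ℂ] E)) (ψ : E)

def cyclicSubspace : Submodule ℂ E :=
  (Submodule.span ℂ ((fun Y : E →L[ℂ] E => Y ψ) '' S)).topologicalClosure

instance [CompleteSpace E] : (cyclicSubspace S ψ).HasOrthogonalProjection :=
  haveI : CompleteSpace (cyclicSubspace S ψ) :=
    (Submodule.isClosed_topologicalClosure _).completeSpace_coe
  inferInstance

variable {S ψ}

theorem apply_mem_cyclicSubspace {Y : E →L[ℂ] E} (hY : Y ∈ S) : Y ψ ∈ cyclicSubspace S ψ :=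
  Submodule.le_topologicalClosure _ (Submodule.subset_span ⟨Y, hY, rfl⟩)

end CyclicSubspace

section SupportProjection

variable {S : Set (H →L[ℂ] H)} {ψ : H}

theorem suppProjOn_eq_starProjection : suppProjOn S ψ = (cyclicSubspace S ψ).starProjection := rfl

theorem comp_suppProjOn_eq_of_apply_eq {G : H →L[ℂ] H} (hG : ∀ Y ∈ S, G (Y ψ) = Y ψ) :
    G ∘L suppProjOn S ψ = suppProjOn S ψ := by
  have hGK : Set.EqOn G (ContinuousLinearMap.id ℂ H) (cyclicSubspace S ψ) :=
    eqOn_closure_span (by rintro _ ⟨Y, hY, rfl⟩; exact hG Y hY)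
  rw [suppProjOn_eq_starProjection]
  ext x
  exact hGK ((cyclicSubspace S ψ).starProjection_apply_mem x)

theorem suppProjOn_comp_comp_suppProjOn {X : H →L[ℂ] H}
    (hX : ∀ Y ∈ S, X (Y ψ) ∈ cyclicSubspace S ψ) :
    suppProjOn S ψ ∘L X ∘L suppProjOn S ψ = X ∘L suppProjOn S ψ := by
  have hXK : cyclicSubspace S ψ ≤ (cyclicSubspace S ψ).comap (X : H →ₗ[ℂ] H) :=
    Submodule.topologicalClosure_minimal _
      (Submodule.span_le.mpr (by rintro _ ⟨Y, hY, rfl⟩; exact hX Y hY))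
      ((Submodule.isClosed_topologicalClosure _).preimage X.continuous)
  rw [suppProjOn_eq_starProjection]
  ext x
  exact Submodule.starProjection_eq_self_iff.mpr
    (hXK ((cyclicSubspace S ψ).starProjection_apply_mem x))

end SupportProjection

theorem VonNeumannAlgebra.apply_apply_comm {N : VonNeumannAlgebra H} {X Y : H →L[ℂ] H}
    (hX : X ∈ N) (hY : Y ∈ N.commutant) (v : H) : X (Y v) = Y (X v) :=
  congr($(VonNeumannAlgebra.mem_commutant_iff.mp hY X hX) v)

section SuppP

variable {N : VonNeumannAlgebra H} {ψ : H} {X : H →L[ℂ] H}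

theorem isStarProjection_suppP (N : VonNeumannAlgebra H) (ψ : H) :
    IsStarProjection (suppP N ψ) :=
  isStarProjection_starProjection (U := cyclicSubspace _ ψ)

theorem comp_suppP_eq_of_apply_eq (hX : X ∈ N) (hXψ : X ψ = ψ) :
    X ∘L suppP N ψ = suppP N ψ :=
  comp_suppProjOn_eq_of_apply_eq fun Y hY => by
    rw [VonNeumannAlgebra.apply_apply_comm hX hY, hXψ]

theorem suppP_comp_comp_suppP {Y₀ : H →L[ℂ] H} (hX : X ∈ N) (hY₀ : Y₀ ∈ N.commutant)
    (hXψ : X ψ = Y₀ ψ) : suppP N ψ ∘L X ∘L suppP N ψ = X ∘L suppP N ψ :=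
  suppProjOn_comp_comp_suppProjOn fun Y hY => by
    rw [VonNeumannAlgebra.apply_apply_comm hX hY, hXψ]
    exact apply_mem_cyclicSubspace (Y := Y * Y₀) (mul_mem hY hY₀)

theorem suppP_commutant (N : VonNeumannAlgebra H) (ψ : H) :
    suppP N.commutant ψ = suppP' N ψ := by
  rw [suppP, VonNeumannAlgebra.commutant_commutant, suppP']

end SuppP

def IsCuntzFamily {ι : Type*} [Fintype ι] (P : H →L[ℂ] H) (V : ι → H →L[ℂ] H) : Prop :=
  (∀ j, adjoint (V j) ∘L V j = P) ∧ ∑ i, V i ∘L adjoint (V i) = P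

namespace BipartiteProtocol

variable {M : VonNeumannAlgebra H} {α : Fin d → ℝ} {R T : Fin d → Fin d → H →L[ℂ] H} {ψ : H}

theorem commutant (h : BipartiteProtocol M α R T ψ) : BipartiteProtocol M.commutant α T R ψ := by
  obtain ⟨⟨hRM, hR⟩, hT, hψ, hRT⟩ := h
  refine ⟨hT, ⟨by simpa using hRM, hR⟩, hψ, fun i j => ?_⟩
  rw [← VonNeumannAlgebra.apply_apply_comm (hRM j 0) (hT.1 i 0), hRT]
  by_cases hij : i = j
  · subst hij; rfl
  · simp [hij, Ne.symm hij]

theorem isCuntzFamily_compression (h : BipartiteProtocol M α R T ψ) (hα : ∀ i, 0 < α i)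
    (hsum : ∑ i, α i ^ 2 = 1) :
    IsCuntzFamily (suppP M ψ) fun i => suppP M ψ ∘L adjoint (R i 0) ∘L suppP M ψ := by
  have hTR := h.commutant.2.2.2
  obtain ⟨⟨hRM, hR⟩, ⟨hTM, hT⟩, hψ, hRT⟩ := h
  have hα₀ : ∀ i, (α i : ℂ) ≠ 0 := fun i => Complex.ofReal_ne_zero.mpr (hα i).ne'
  have hRadj := smul_adjoint_apply_eq_of_embezzle hR hT hψ hsum hRT
  have hTadj := smul_adjoint_apply_eq_of_embezzle hT hR hψ hsum hTR
  have hinv : ∀ i, suppP M ψ ∘L adjoint (R i 0) ∘L suppP M ψ = adjoint (R i 0) ∘L suppP M ψ :=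
    fun i => suppP_comp_comp_suppP (star_mem (hRM i 0))
      (M.commutant.toStarSubalgebra.smul_mem (hTM i 0) (α i : ℂ)⁻¹) <| by
      rw [smul_apply, ← hRadj, inv_smul_smul₀ (hα₀ i)]
  have hinv' : ∀ i, suppP M ψ ∘L R i 0 ∘L suppP M ψ = R i 0 ∘L suppP M ψ :=
    fun i => suppP_comp_comp_suppP (hRM i 0)
      (M.commutant.toStarSubalgebra.smul_mem (star_mem (hTM i 0)) (α i : ℂ)) <| by
      rw [smul_apply, ← hTadj, star_eq_adjoint]
  have hcoiso : ∀ i, R i 0 ∘L adjoint (R i 0) ∘L suppP M ψ = suppP M ψ := fun i =>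
    comp_suppP_eq_of_apply_eq (mul_mem (hRM i 0) (star_mem (hRM i 0))) <| by
      rw [mul_apply_eq_comp, star_eq_adjoint, ← inv_smul_smul₀ (hα₀ i) (adjoint (R i 0) ψ), hRadj,
        map_smul, hRT, if_pos rfl, inv_smul_smul₀ (hα₀ i)]
  have hsumP : (∑ i, adjoint (R i 0) ∘L R i 0) ∘L suppP M ψ = suppP M ψ :=
    comp_suppP_eq_of_apply_eq (sum_mem fun i _ => mul_mem (star_mem (hRM i 0)) (hRM i 0)) <| by
      simpa using sum_adjoint_apply_apply_eq_self_of_embezzle hR hT hψ hsum hTR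
  refine ⟨fun j => adjoint_compression_comp_compression (isStarProjection_suppP M ψ) (hinv j)
    (hcoiso j), ?_⟩
  simp only [compression_comp_adjoint_compression (isStarProjection_suppP M ψ) (hinv _) (hinv' _)]
  exact (finsetSum_comp _ _).symm.trans hsumP

end BipartiteProtocol

end Protocol

theorem compressions_are_Cuntz_isometries_general
    {H : Type*} [NormedAddCommGroup H] [InnerProductSpace ℂ H] [CompleteSpace H]
    (M : VonNeumannAlgebra H) {d : ℕ} [NeZero d]
    (α : Fin d → ℝ) (hα : ∀ i, 0 < α i) (hsum : ∑ i, (α i) ^ 2 = 1)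
    (R T : Fin d → Fin d → H →L[ℂ] H) (ψ : H)
    (hproto : BipartiteProtocol M α R T ψ)
    (P P' : H →L[ℂ] H) (hP : P = suppP M ψ) (hP' : P' = suppP' M ψ)
    (V W : Fin d → H →L[ℂ] H)
    (hV : ∀ i, V i = P ∘L (adjoint (R i 0)) ∘L P)
    (hW : ∀ j, W j = P' ∘L (adjoint (T j 0)) ∘L P') :
    (∀ j, (adjoint (V j)) ∘L (V j) = P) ∧
      (∑ i, (V i) ∘L (adjoint (V i))) = P ∧
      (∀ j, (adjoint (W j)) ∘L (W j) = P') ∧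
      (∑ i, (W i) ∘L (adjoint (W i))) = P' := by
  obtain rfl := funext hV
  obtain rfl := funext hW
  subst hP hP'
  obtain ⟨hV₁, hV₂⟩ := hproto.isCuntzFamily_compression hα hsum
  obtain ⟨hW₁, hW₂⟩ := suppP_commutant M ψ ▸ hproto.commutant.isCuntzFamily_compression hα hsum
  exact ⟨hV₁, hV₂, hW₁, hW₂⟩

/-- If `(R, T, ψ)` is a bipartite exact embezzlement protocol for `α`, `P` is the support
projection onto the closure of `M' ψ`, `P'` the one onto the closure of `M ψ`,
`V i = P (R i 0)* P` and `W j = P' (T j 0)* P'`, then the `V i` form a collection of `d`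
Cuntz isometries on the range of `P` and the `W j` one on the range of `P'`:
`(V j)* (V j) = P`, `∑ i, (V i)(V i)* = P`, `(W j)* (W j) = P'`, `∑ i, (W i)(W i)* = P'`. -/
theorem compressions_are_Cuntz_isometries
    {H : Type*} [NormedAddCommGroup H] [InnerProductSpace ℂ H] [CompleteSpace H]
    (M : VonNeumannAlgebra H) {d : ℕ} [NeZero d] (hd : 2 ≤ d)
    (α : Fin d → ℝ) (hα : ∀ i, 0 < α i) (hsum : ∑ i, (α i) ^ 2 = 1)
    (R T : Fin d → Fin d → H →L[ℂ] H) (ψ : H)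
    (hproto : BipartiteProtocol M α R T ψ)
    (P P' : H →L[ℂ] H) (hP : P = suppP M ψ) (hP' : P' = suppP' M ψ)
    (V W : Fin d → H →L[ℂ] H)
    (hV : ∀ i, V i = P ∘L (adjoint (R i 0)) ∘L P)
    (hW : ∀ j, W j = P' ∘L (adjoint (T j 0)) ∘L P') :
    (∀ j, (adjoint (V j)) ∘L (V j) = P) ∧
      (∑ i, (V i) ∘L (adjoint (V i))) = P ∧
      (∀ j, (adjoint (W j)) ∘L (W j) = P') ∧
      (∑ i, (W i) ∘L (adjoint (W i))) = P' :=
  compressions_are_Cuntz_isometries_general M α hα hsum R T ψ hproto P P' hP hP' V W hV hW
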